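/- For G = G(m,n,k) with trivial centre and S a base: every orbit orb(x, S*) with x ∈ S* meets S (i.e., is basic) if and only if Σ_G(S) is complete, and in that case Σ_G(S) is the disjoint union over x ∈ S* of the maximal containers C(x,1), so |Σ_G(S)| = m·|S*|. -/

import Mathlib

/-- `n = ind_m(k)`: `n` is the least positive integer with `k^n ≡ 1 (mod m)`. -/
def IsIndex (m k n : ℕ) : Prop :=
  0 < n ∧ k ^ n ≡ 1 [MOD m] ∧ ∀ d : ℕ, 0 < d → k ^ d ≡ 1 [MOD m] → n ≤ d

/-- The mu-map `μ(x,y)` of `G = G(m,n,k)`, acting on elements of `G` written in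
the normal form `a^i b^j` (identified with pairs `(i,j) ∈ ℤ_m × ℤ_n`):
`(a^i b^j) μ(x,y) = a^N` with `N ≡ x·i·k^j − y·(k^j − 1) (mod m)`. -/
def Mu (m n k : ℕ) (x y : ZMod m) : Function.End (ZMod m × ZMod n) :=
  fun p => (x * p.1 * (k : ZMod m) ^ p.2.val -
    y * ((k : ZMod m) ^ p.2.val - 1), 0)

/-- The container `C(x,y) = {μ(x, yz) : z ∈ ℤ_m}`. -/
def Container (m n k : ℕ) (x y : ZMod m) :
    Set (Function.End (ZMod m × ZMod n)) :=
  {f | ∃ z : ZMod m, f = Mu m n k x (y * z)}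
/-- The multiplicative closure `S*` of `S` in `ℤ_m`. -/
def mulClosure (m : ℕ) (S : Set (ZMod m)) : Set (ZMod m) :=
  Subsemigroup.closure S

/-- `S ⊆ ℤ_m` is a base if it contains `0` and at least one unit of `ℤ_m`. -/
def IsBase (m : ℕ) (S : Set (ZMod m)) : Prop :=
  (0 : ZMod m) ∈ S ∧ ∃ u ∈ S, IsUnit u

/-- The set `Γ_μ(S) = {μ(s,z) : s ∈ S, z ∈ ℤ_m}` of mu-generators. -/
def GammaMu (m n k : ℕ) (S : Set (ZMod m)) :
    Set (Function.End (ZMod m × ZMod n)) :=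
  {f | ∃ s ∈ S, ∃ z : ZMod m, f = Mu m n k s z}

/-- The set `Π_μ(S) = {μ(s·s*, s*·z) : s ∈ S, s* ∈ S*, z ∈ ℤ_m}` of
mu-products. -/
def PiMu (m n k : ℕ) (S : Set (ZMod m)) :
    Set (Function.End (ZMod m × ZMod n)) :=
  {f | ∃ s ∈ S, ∃ t ∈ mulClosure m S, ∃ z : ZMod m,
    f = Mu m n k (s * t) (t * z)}

/-- The `G`-semigroup `Σ_G(S)`: the subsemigroup of `M(G)` (under composition)
generated by `Γ_μ(S)`. -/
def SigmaG (m n k : ℕ) (S : Set (ZMod m)) :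
    Set (Function.End (ZMod m × ZMod n)) :=
  Subsemigroup.closure (GammaMu m n k S)
/-- The orbit `orb(x, S*) = {x·u : u ∈ I(S*)}`, where `I(S*)` is the set of
units of `ℤ_m` lying in `S*`. -/
def orb (m : ℕ) (S : Set (ZMod m)) (x : ZMod m) : Set (ZMod m) :=
  {w | ∃ u ∈ mulClosure m S, IsUnit u ∧ w = x * u}


/-! Composition of mu-maps is `μ(x,y) ∘ μ(x',y') = μ(xx', xy')`, and since `k - 1` is a unit
of `ℤ_m` the pair `(x, y)` can be read off from `μ(x,y)`. Hence `Σ_G(S) = Π_μ(S)`, and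
`μ(x,1) = μ(st, tz)` forces `tz = 1`: `t` is a unit of `S*`, its inverse again lies in `S*`
(units of `ℤ_m` have finite order), and `x t⁻¹ = s ∈ S ∩ orb(x, S*)`. Conversely, if
`xu ∈ S` for a unit `u ∈ S*`, then `μ(x,z) = μ((xu)u⁻¹, u⁻¹(uz)) ∈ Π_μ(S)`. Once `Σ_G(S)` is
complete it equals `{μ(x,z) : x ∈ S*, z ∈ ℤ_m}`, the injective image of `S* × ℤ_m`. -/

theorem Subsemigroup.pow_succ_mem {M : Type*} [Monoid M] (T : Subsemigroup M) {x : M}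
    (hx : x ∈ T) : ∀ d : ℕ, x ^ (d + 1) ∈ T
  | 0 => by simpa using hx
  | d + 1 => by rw [pow_succ]; exact T.mul_mem (pow_succ_mem T hx d) hx

-- `u⁻¹ = u ^ (2 * orderOf u - 1)`, a positive power of `u`, even when `orderOf u = 1`.
theorem Subsemigroup.val_inv_mem_of_isOfFinOrder {M : Type*} [Monoid M] (T : Subsemigroup M)
    {u : Mˣ} (hu : IsOfFinOrder u) (hT : (u : M) ∈ T) : ((u⁻¹ : Mˣ) : M) ∈ T := by
  obtain ⟨d, hd⟩ := Nat.exists_eq_add_of_lt hu.orderOf_pos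
  have hinv : u⁻¹ = u ^ (2 * d + 1) := by
    rw [inv_eq_iff_mul_eq_one, ← pow_succ', show 2 * d + 1 + 1 = 2 * orderOf u by omega,
      pow_mul', pow_orderOf_eq_one, one_pow]
  rw [hinv, Units.val_pow_eq_pow_val]
  exact T.pow_succ_mem hT _

theorem Set.ncard_image2_of_injective2 {α β γ : Type*} {f : α → β → γ}
    (hf : Function.Injective2 f) (s : Set α) (t : Set β) :
    (Set.image2 f s t).ncard = s.ncard * t.ncard := by
  rw [← Set.image_prod, ← Set.ncard_prod]
  exact Set.ncard_image_of_injective _ hf.uncurry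

section

variable {m n k : ℕ}

theorem mu_mul (x y x' y' : ZMod m) :
    Mu m n k x y * Mu m n k x' y' = Mu m n k (x * x') (x * y') := by
  funext p
  refine Prod.ext ?_ rfl
  show (Mu m n k x y (Mu m n k x' y' p)).1 = _
  simp only [Mu, ZMod.val_zero, pow_zero]
  ring

theorem isUnit_natCast_sub_one (hcop : Nat.gcd m (k - 1) = 1) : IsUnit ((k : ZMod m) - 1) := by
  rcases Nat.eq_zero_or_pos k with rfl | hk
  · have : Subsingleton (ZMod m) := ZMod.subsingleton_iff.mpr (by simpa using hcop)
    exact isUnit_of_subsingleton _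
  · rw [← Nat.cast_pred hk, ZMod.isUnit_iff_coprime]
    exact Nat.coprime_comm.mp hcop

theorem IsIndex.one_lt [Nontrivial (ZMod m)] (hcop : Nat.gcd m (k - 1) = 1)
    (hind : IsIndex m k n) : 1 < n := by
  obtain ⟨hn, hkn, -⟩ := hind
  refine lt_of_le_of_ne hn fun hn1 => ?_
  have hk1 : (k : ZMod m) = 1 := by
    simpa [← hn1] using (ZMod.natCast_eq_natCast_iff _ _ _).mpr hkn
  simpa [hk1] using isUnit_natCast_sub_one (m := m) hcop

-- `μ(x,y)` sends `a` to `a^x` and `b` to `a^{-y(k-1)}`, and `k - 1` is a unit.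
theorem mu_injective2 (hcop : Nat.gcd m (k - 1) = 1) (hind : IsIndex m k n) :
    Function.Injective2 (Mu m n k) := by
  intro x x' y y' h
  rcases subsingleton_or_nontrivial (ZMod m) with _ | _
  · exact ⟨Subsingleton.elim _ _, Subsingleton.elim _ _⟩
  have : Fact (1 < n) := ⟨hind.one_lt hcop⟩
  have ha := congrArg (fun f => (f (1, 0)).1) h
  have hb := congrArg (fun f => (f (0, 1)).1) h
  simp only [Mu, ZMod.val_zero, ZMod.val_one, pow_zero, pow_one, mul_one, mul_zero, sub_self,
    sub_zero, zero_mul, zero_sub, neg_inj] at ha hb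
  exact ⟨ha, (isUnit_natCast_sub_one hcop).mul_right_cancel hb⟩

theorem container_one_eq_range (x : ZMod m) : Container m n k x 1 = Set.range (Mu m n k x) := by
  simp [Container, Set.range, eq_comm]

variable {S : Set (ZMod m)}

theorem IsBase.one_mem_mulClosure (hS : IsBase m S) : (1 : ZMod m) ∈ mulClosure m S := by
  obtain ⟨-, u, huS, hu⟩ := hS
  have hu' : hu.unit.val ∈ mulClosure m S := Subsemigroup.subset_closure huS
  have := (Subsemigroup.closure S).mul_mem hu'
    ((Subsemigroup.closure S).val_inv_mem_of_isOfFinOrder (isOfFinOrder_of_finite _) hu')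
  rwa [Units.mul_inv] at this

theorem mu_zero_mem_sigmaG {t : ZMod m} (ht : t ∈ mulClosure m S) :
    Mu m n k t 0 ∈ SigmaG m n k S := by
  induction ht using Subsemigroup.closure_induction with
  | mem s hs => exact Subsemigroup.subset_closure ⟨s, hs, 0, rfl⟩
  | mul a b _ _ ha hb =>
    have := (Subsemigroup.closure (GammaMu m n k S)).mul_mem ha hb
    rwa [mu_mul, mul_zero] at this

theorem piMu_subset_sigmaG : PiMu m n k S ⊆ SigmaG m n k S := by
  rintro _ ⟨s, hs, t, ht, z, rfl⟩
  have := (Subsemigroup.closure (GammaMu m n k S)).mul_mem (mu_zero_mem_sigmaG (n := n) (k := k) ht)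
    (Subsemigroup.subset_closure ⟨s, hs, z, rfl⟩)
  rwa [mu_mul, mul_comm t s] at this

theorem sigmaG_subset_piMu (h1 : (1 : ZMod m) ∈ mulClosure m S) :
    SigmaG m n k S ⊆ PiMu m n k S := by
  intro f hf
  induction hf using Subsemigroup.closure_induction with
  | mem f hf =>
    obtain ⟨s, hs, z, rfl⟩ := hf
    exact ⟨s, hs, 1, h1, z, by simp⟩
  | mul f g _ _ hf hg =>
    obtain ⟨s, hs, t, ht, z, rfl⟩ := hf
    obtain ⟨s', hs', t', ht', z', rfl⟩ := hg
    refine ⟨s', hs', s * t * t', ?_, z', ?_⟩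
    · exact (Subsemigroup.closure S).mul_mem
        ((Subsemigroup.closure S).mul_mem (Subsemigroup.subset_closure hs) ht) ht'
    · rw [mu_mul]; congr 1 <;> ring

theorem sigmaG_eq_piMu (hS : IsBase m S) : SigmaG m n k S = PiMu m n k S :=
  (sigmaG_subset_piMu hS.one_mem_mulClosure).antisymm piMu_subset_sigmaG

theorem container_one_subset_sigmaG {x : ZMod m} (hx : (orb m S x ∩ S).Nonempty) :
    Container m n k x 1 ⊆ SigmaG m n k S := by
  obtain ⟨_, ⟨u, hu, hunit, rfl⟩, hxu⟩ := hx
  lift u to (ZMod m)ˣ using hunit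
  have hu' := (Subsemigroup.closure S).val_inv_mem_of_isOfFinOrder (isOfFinOrder_of_finite u) hu
  rintro _ ⟨z, rfl⟩
  refine piMu_subset_sigmaG ⟨x * u, hxu, _, hu', u * z, ?_⟩
  simp [mul_assoc]

theorem orb_inter_nonempty_of_mu_mem (hS : IsBase m S) (hcop : Nat.gcd m (k - 1) = 1)
    (hind : IsIndex m k n) {x : ZMod m} (hx : Mu m n k x 1 ∈ SigmaG m n k S) :
    (orb m S x ∩ S).Nonempty := by
  rw [sigmaG_eq_piMu hS] at hx
  obtain ⟨s, hs, t, ht, z, h⟩ := hx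
  obtain ⟨rfl, htz⟩ := mu_injective2 hcop hind h
  lift t to (ZMod m)ˣ using IsUnit.of_mul_eq_one (a := t) z htz.symm
  have ht' := (Subsemigroup.closure S).val_inv_mem_of_isOfFinOrder (isOfFinOrder_of_finite t) ht
  exact ⟨s, ⟨_, ht', Units.isUnit _, by simp [mul_assoc]⟩, hs⟩

theorem orb_inter_nonempty_iff_container_subset (hS : IsBase m S)
    (hcop : Nat.gcd m (k - 1) = 1) (hind : IsIndex m k n) (x : ZMod m) :
    (orb m S x ∩ S).Nonempty ↔ Container m n k x 1 ⊆ SigmaG m n k S :=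
  ⟨container_one_subset_sigmaG, fun h =>
    orb_inter_nonempty_of_mu_mem hS hcop hind (h ⟨1, by rw [mul_one]⟩)⟩

theorem sigmaG_subset_image2 :
    SigmaG m n k S ⊆ Set.image2 (Mu m n k) (mulClosure m S) .univ := by
  intro f hf
  induction hf using Subsemigroup.closure_induction with
  | mem f hf =>
    obtain ⟨s, hs, z, rfl⟩ := hf
    exact ⟨s, Subsemigroup.subset_closure hs, z, trivial, rfl⟩
  | mul f g _ _ hf hg =>
    obtain ⟨x, hx, y, -, rfl⟩ := hf
    obtain ⟨x', hx', y', -, rfl⟩ := hg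
    exact ⟨x * x', (Subsemigroup.closure S).mul_mem hx hx', x * y', trivial, (mu_mul ..).symm⟩

theorem sigmaG_eq_image2
    (hcomplete : ∀ x ∈ mulClosure m S, Container m n k x 1 ⊆ SigmaG m n k S) :
    SigmaG m n k S = Set.image2 (Mu m n k) (mulClosure m S) .univ := by
  refine sigmaG_subset_image2.antisymm ?_
  rintro _ ⟨x, hx, z, -, rfl⟩
  exact hcomplete x hx (by rw [container_one_eq_range]; exact ⟨z, rfl⟩)

end

theorem stmt_17_general (m n k : ℕ)
    (hcop : Nat.gcd m (k - 1) = 1) (hind : IsIndex m k n)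
    (S : Set (ZMod m)) (hS : IsBase m S) :
    ((∀ x ∈ mulClosure m S, (orb m S x ∩ S).Nonempty) ↔
        ∀ x ∈ mulClosure m S, Container m n k x 1 ⊆ SigmaG m n k S) ∧
      ((∀ x ∈ mulClosure m S, (orb m S x ∩ S).Nonempty) →
        (SigmaG m n k S = ⋃ x ∈ mulClosure m S, Container m n k x 1) ∧
        ((mulClosure m S).Pairwise fun x₁ x₂ =>
          Disjoint (Container m n k x₁ 1) (Container m n k x₂ 1)) ∧
        (SigmaG m n k S).ncard = m * (mulClosure m S).ncard) := by
  have hiff := fun x => orb_inter_nonempty_iff_container_subset (n := n) hS hcop hind x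
  refine ⟨forall₂_congr fun x _ => hiff x, fun hbasic => ?_⟩
  have hinj := mu_injective2 hcop hind
  have hsigma := sigmaG_eq_image2 fun x hx => (hiff x).mp (hbasic x hx)
  refine ⟨?_, ?_, ?_⟩
  · simp only [hsigma, container_one_eq_range, ← Set.image_univ, Set.iUnion_image_left]
  · intro x₁ _ x₂ _ hne
    simp only [container_one_eq_range, Set.disjoint_range_iff]
    exact fun z₁ z₂ h => hne (hinj h).1
  · rw [hsigma, Set.ncard_image2_of_injective2 hinj, Set.ncard_univ, Nat.card_zmod, mul_comm]

/-- every orbit `orb(x,S*)`, `x ∈ S*`, meets `S` (is basic) iff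
`Σ_G(S)` is complete (i.e. `C(x,1) ⊆ Σ_G(S)` for all `x ∈ S*`); and in that
case `Σ_G(S)` is the disjoint union over `x ∈ S*` of the maximal containers
`C(x,1)`, so that `|Σ_G(S)| = m·|S*|`. -/
theorem stmt_17 (m n k : ℕ) (hm : 0 < m) (hk : 0 < k)
    (hcop : Nat.gcd m (k - 1) = 1) (hind : IsIndex m k n)
    (S : Set (ZMod m)) (hS : IsBase m S) :
    ((∀ x ∈ mulClosure m S, (orb m S x ∩ S).Nonempty) ↔
        ∀ x ∈ mulClosure m S, Container m n k x 1 ⊆ SigmaG m n k S) ∧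
      ((∀ x ∈ mulClosure m S, (orb m S x ∩ S).Nonempty) →
        (SigmaG m n k S = ⋃ x ∈ mulClosure m S, Container m n k x 1) ∧
        ((mulClosure m S).Pairwise fun x₁ x₂ =>
          Disjoint (Container m n k x₁ 1) (Container m n k x₂ 1)) ∧
        (SigmaG m n k S).ncard = m * (mulClosure m S).ncard) :=
  stmt_17_general m n k hcop hind S hS
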